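/- arXiv:2502.02320 — 4 statements merged into one kernel-verified Lean document; each statement's English description precedes it below -/
import Mathlib

section
/- Let n and t be natural numbers with n > 3t ≥ 0, let V be a finite type with exactly n - t elements, and let E : V → V → Prop be a symmetric relation (a graph in which loops are allowed but there are no multiedges). For a vertex v, write N[v] for its closed neighborhood, i.e. the finite set {u : E v u} ∪ {v}. Let a be a real number with 0 < a < 1, and let C be a finite subset of V with |C| = n - 3t such that every v ∈ C satisfies |N[v]| ≥ n - 3t. Let D be the finite set of vertices v ∈ V such that |N[v] ∩ C| ≥ a·(n - 3t). Then, as real numbers, |D| ≥ n - (3 + 2a/(1 - a))·t. -/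
open Classical

/-- Graph lemma: a graph with loops but no multiedges on `n - t` vertices,
a set `C` of `n - 3t` vertices each with closed neighborhood of size at least
`n - 3t`, and `D` the set of vertices with at least `a·(n - 3t)` neighbors in `C`;
then `|D| ≥ n - (3 + 2a/(1-a))·t`. -/
theorem graph_lemma (n t : ℕ) (hnt : n > 3 * t)
    (V : Type) [Fintype V] [DecidableEq V]
    (hV : (Fintype.card V : ℝ) = (n : ℝ) - t)
    (E : V → V → Prop) (hE : Symmetric E)
    (N : V → Finset V)
    (hN : ∀ v u : V, u ∈ N v ↔ (E v u ∨ u = v))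
    (a : ℝ) (ha0 : 0 < a) (ha1 : a < 1)
    (C : Finset V) (hC : (C.card : ℝ) = (n : ℝ) - 3 * t)
    (hCnbhd : ∀ v ∈ C, ((N v).card : ℝ) ≥ (n : ℝ) - 3 * t)
    (D : Finset V)
    (hD : ∀ v : V, v ∈ D ↔ (((N v ∩ C).card : ℝ) ≥ a * ((n : ℝ) - 3 * t))) :
    (D.card : ℝ) ≥ (n : ℝ) - (3 + 2 * a / (1 - a)) * t := by
  have hm : (0:ℝ) < (n:ℝ) - 3*t := by
    have h : (3*t:ℝ) < n := by exact_mod_cast hnt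
    linarith
  have h1a : (0:ℝ) < 1 - a := by linarith
  have hsym : ∀ u v : V, u ∈ N v ↔ v ∈ N u := by
    intro u v
    rw [hN, hN]
    constructor
    · rintro (h | h)
      · exact Or.inl (hE h)
      · exact Or.inr h.symm
    · rintro (h | h)
      · exact Or.inl (hE h)
      · exact Or.inr h.symm
  have h1 : ∀ u : V, N u ∩ C = C.filter (fun v => v ∈ N u) := by
    intro u; ext v; simp [Finset.mem_filter, and_comm]
  have hdc : ∑ u : V, ((N u ∩ C).card) = ∑ v ∈ C, (N v).card := by
    calc ∑ u : V, (N u ∩ C).card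
        = ∑ u : V, ∑ v ∈ C, if v ∈ N u then 1 else 0 := by
          simp_rw [h1, Finset.card_filter]
      _ = ∑ v ∈ C, ∑ u : V, if v ∈ N u then 1 else 0 := Finset.sum_comm
      _ = ∑ v ∈ C, ∑ u : V, if u ∈ N v then 1 else 0 := by
          refine Finset.sum_congr rfl fun v _ => Finset.sum_congr rfl fun u _ => ?_
          simp [hsym u v]
      _ = ∑ v ∈ C, (N v).card := by
          refine Finset.sum_congr rfl fun v _ => ?_
          rw [← Finset.card_filter]
          congr 1
          ext u; simp
  have lower : ((n:ℝ) - 3*t) * ((n:ℝ) - 3*t) ≤ ∑ v ∈ C, ((N v).card : ℝ) := by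
    calc ((n:ℝ) - 3*t) * ((n:ℝ) - 3*t) = ∑ v ∈ C, ((n:ℝ) - 3*t) := by
          rw [Finset.sum_const, nsmul_eq_mul, hC]
      _ ≤ ∑ v ∈ C, ((N v).card : ℝ) := Finset.sum_le_sum fun v hv => hCnbhd v hv
  have hDcard : (D.card : ℝ) ≤ (n:ℝ) - t := by
    rw [← hV]; exact_mod_cast Finset.card_le_univ D
  have hcompl : ((Dᶜ : Finset V).card : ℝ) = ((n:ℝ) - t) - D.card := by
    rw [Finset.card_compl]
    rw [Nat.cast_sub (Finset.card_le_univ D), hV]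
  have upper : ∑ u : V, (((N u ∩ C).card : ℝ)) ≤
      (D.card : ℝ) * ((n:ℝ) - 3*t) + (((n:ℝ) - t) - D.card) * (a * ((n:ℝ) - 3*t)) := by
    rw [← Finset.sum_add_sum_compl D]
    have hA : ∑ u ∈ D, (((N u ∩ C).card : ℝ)) ≤ (D.card : ℝ) * ((n:ℝ) - 3*t) := by
      calc ∑ u ∈ D, (((N u ∩ C).card : ℝ)) ≤ ∑ u ∈ D, ((n:ℝ) - 3*t) := by
            refine Finset.sum_le_sum fun u _ => ?_
            rw [← hC]
            exact_mod_cast Finset.card_le_card (Finset.inter_subset_right)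
        _ = (D.card : ℝ) * ((n:ℝ) - 3*t) := by rw [Finset.sum_const, nsmul_eq_mul]
    have hB : ∑ u ∈ Dᶜ, (((N u ∩ C).card : ℝ)) ≤ (((n:ℝ) - t) - D.card) * (a * ((n:ℝ) - 3*t)) := by
      calc ∑ u ∈ Dᶜ, (((N u ∩ C).card : ℝ)) ≤ ∑ u ∈ Dᶜ, a * ((n:ℝ) - 3*t) := by
            refine Finset.sum_le_sum fun u hu => ?_
            have hu' : u ∉ D := Finset.mem_compl.mp hu
            have := (hD u).not.mp hu'
            linarith [not_le.mp (by simpa [ge_iff_le] using this)]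
        _ = (((n:ℝ) - t) - D.card) * (a * ((n:ℝ) - 3*t)) := by
            rw [Finset.sum_const, nsmul_eq_mul, hcompl]
    linarith
  have hcast : (∑ u : V, (((N u ∩ C).card : ℝ))) = ∑ v ∈ C, ((N v).card : ℝ) := by
    exact_mod_cast congrArg (Nat.cast : ℕ → ℝ) hdc
  have main : ((n:ℝ) - 3*t) * ((n:ℝ) - 3*t) ≤
      (D.card : ℝ) * ((n:ℝ) - 3*t) + (((n:ℝ) - t) - D.card) * (a * ((n:ℝ) - 3*t)) := by
    rw [← hcast] at lower
    linarith
  have hdiv : ((n:ℝ) - 3*t) ≤ (D.card : ℝ) + (((n:ℝ) - t) - D.card) * a := by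
    nlinarith [main, hm]
  have hr : (2 * a / (1 - a)) * (1 - a) = 2 * a := div_mul_cancel₀ _ (ne_of_gt h1a)
  have ht0 : (0:ℝ) ≤ t := Nat.cast_nonneg t
  nlinarith [hdiv, hr, h1a, ht0, ha0]
end

section
/- Let F be a finite field with q elements, let d ≥ 1 be a natural number, and let x : Fin d → F be an injective family of d distinct interpolation nodes (so q ≥ d). For a tuple s : Fin d → F, let p_s be the Lagrange interpolation polynomial, i.e. the unique polynomial of degree less than d with p_s(x_j) = s_j for all j, and define the keyed hash h(k, s) = p_s(k) for keys k ∈ F. Then for any two distinct tuples s ≠ s' in F^d: (1) the number of keys k ∈ F with h(k, s) = h(k, s') is at most d - 1; and consequently (2) if k is drawn uniformly at random from F, the probability that h(k, s) = h(k, s') is at most (d - 1)/q. -/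
open Classical Polynomial Finset

theorem Lagrange.interpolate_univ_injective {F ι : Type*} [Field F] [Fintype ι] [DecidableEq ι]
    {v : ι → F} (hv : Function.Injective v) : Function.Injective (interpolate univ v) := by
  intro r r' hrr'
  funext i
  simpa only [eval_interpolate_at_node _ hv.injOn (mem_univ i)] using congrArg (eval (v i)) hrr'

theorem Polynomial.card_filter_eval_eq_lt {R : Type*} [CommRing R] [IsDomain R] [Fintype R]
    [DecidableEq R] {f g : R[X]} {n : ℕ} (hfg : f ≠ g) (hf : f.degree < n) (hg : g.degree < n) :
    #{k | f.eval k = g.eval k} < n := by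
  by_contra! hn
  exact hfg <| eq_of_degree_sub_lt_of_eval_finset_eq _
    ((degree_sub_le f g).trans_lt (max_lt hf hg) |>.trans_le (mod_cast hn))
    (fun k hk => (mem_filter.mp hk).2)

theorem almost_universal_hash_general (F : Type) [Field F] [Fintype F] [DecidableEq F]
    (q : ℕ)
    (d : ℕ)
    (x : Fin d → F) (hx : Function.Injective x)
    (h : F → (Fin d → F) → F)
    (hh : ∀ (k : F) (s : Fin d → F),
      h k s = (Lagrange.interpolate Finset.univ x s).eval k)
    (s s' : Fin d → F) (hss' : s ≠ s') :
    (Finset.univ.filter (fun k : F => h k s = h k s')).card ≤ d - 1 ∧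
    ((Finset.univ.filter (fun k : F => h k s = h k s')).card : ℝ) / q
      ≤ ((d : ℝ) - 1) / q := by
  have hdeg (r : Fin d → F) : (Lagrange.interpolate univ x r).degree < d := by
    simpa using Lagrange.degree_interpolate_lt (s := univ) r hx.injOn
  have hcollisions : #{k | h k s = h k s'} < d := by
    simpa only [hh] using card_filter_eval_eq_lt
      ((Lagrange.interpolate_univ_injective hx).ne hss') (hdeg s) (hdeg s')
  refine ⟨by omega, div_le_div_of_nonneg_right ?_ q.cast_nonneg⟩
  have : (#{k | h k s = h k s'} : ℝ) + 1 ≤ d := by exact_mod_cast hcollisions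
  linarith

/-- Almost-universality of the polynomial-evaluation hash: for `d` distinct
nodes `x` in a finite field `F` with `q` elements, hashing a tuple `s : Fin d → F`
by evaluating its Lagrange interpolation polynomial at the key `k`, any two
distinct tuples collide on at most `d - 1` keys, hence a uniformly random key
yields a collision with probability at most `(d - 1)/q`. -/
theorem almost_universal_hash (F : Type) [Field F] [Fintype F] [DecidableEq F]
    (q : ℕ) (hq : Fintype.card F = q)
    (d : ℕ) (hd : 1 ≤ d)
    (x : Fin d → F) (hx : Function.Injective x)
    (h : F → (Fin d → F) → F)
    (hh : ∀ (k : F) (s : Fin d → F),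
      h k s = (Lagrange.interpolate Finset.univ x s).eval k)
    (s s' : Fin d → F) (hss' : s ≠ s') :
    (Finset.univ.filter (fun k : F => h k s = h k s')).card ≤ d - 1 ∧
    ((Finset.univ.filter (fun k : F => h k s = h k s')).card : ℝ) / q
      ≤ ((d : ℝ) - 1) / q :=
  almost_universal_hash_general F q d x hx h hh s s' hss'
end

section
/- Let n and t be natural numbers with n > 3t, let I be a finite type with exactly n elements, let M and Σ be types, and let Enc : M → (I → Σ) be an encoding function such that for every subset S of I with |S| = n - 3t, the map sending a message m to the restriction of Enc m to S is injective. Let H ⊆ I be a finite set with |H| ≥ n - t (the honest parties), let v : I → M assign an input to each party, and let i, j ∈ H. Suppose there are finite sets A, B ⊆ I with |A| ≥ n - t and |B| ≥ n - t such that for every k ∈ A ∩ H one has Enc (v k) k = Enc (v i) k, and for every k ∈ B ∩ H one has Enc (v k) k = Enc (v j) k. Then v i = v j. -/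
open Classical

/-- Consistency core of the reliable agreement protocol PRA: with an
`(n, n - 3t)`-error correcting code, if honest parties `i` and `j` each see
`n - t` parties whose symbols match their own values, then `v i = v j`. -/
theorem pra_consistency (n t : ℕ) (hnt : n > 3 * t)
    (I : Type) [Fintype I] [DecidableEq I] (hI : Fintype.card I = n)
    (M Sym : Type) (Enc : M → (I → Sym))
    (hEnc : ∀ S : Finset I, S.card = n - 3 * t →
      Function.Injective (fun m : M => (fun i : {i // i ∈ S} => Enc m i.1)))
    (H : Finset I) (hH : n - t ≤ H.card)
    (v : I → M) (i j : I) (hi : i ∈ H) (hj : j ∈ H)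
    (A B : Finset I) (hA : n - t ≤ A.card) (hB : n - t ≤ B.card)
    (hAi : ∀ k ∈ A ∩ H, Enc (v k) k = Enc (v i) k)
    (hBj : ∀ k ∈ B ∩ H, Enc (v k) k = Enc (v j) k) :
    v i = v j := by
  have hcu : ∀ X : Finset I, X.card ≤ n := by
    intro X; rw [← hI]; exact X.card_le_univ
  have h1 : H.card - t ≤ (A ∩ H).card := by
    have := Finset.card_union_add_card_inter A H
    have := hcu (A ∪ H)
    omega
  have h2 : n - 3 * t ≤ ((A ∩ H) ∩ (B ∩ H)).card := by
    have := Finset.card_union_add_card_inter (A ∩ H) (B ∩ H)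
    have hsub : (A ∩ H) ∪ (B ∩ H) ⊆ H := by
      intro x hx; rcases Finset.mem_union.1 hx with h | h <;>
        exact (Finset.mem_inter.1 h).2
    have := Finset.card_le_card hsub
    have := hcu H
    have h3 : H.card - t ≤ (B ∩ H).card := by
      have := Finset.card_union_add_card_inter B H
      have := hcu (B ∪ H)
      omega
    omega
  obtain ⟨S, hS, hScard⟩ := Finset.exists_subset_card_eq h2
  apply hEnc S hScard
  funext k
  have hk := hS k.2
  simp only [Finset.mem_inter] at hk
  simp only
  rw [← hAi k.1 (Finset.mem_inter.2 ⟨hk.1.1, hk.1.2⟩),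
      hBj k.1 (Finset.mem_inter.2 ⟨hk.2.1, hk.2.2⟩)]
end

section
/- Let M and Σ be types, let n, δ ≥ 1, and K be natural numbers, and let Enc : M → (Fin n → Σ) be an encoding such that for any two distinct messages m ≠ m', the encodings Enc m and Enc m' agree in at most δ - 1 coordinates. Let z ∈ M, and let f : Fin n → M be a function whose range contains at most K values different from z. Then the number of indices j ∈ Fin n such that f j ≠ z and Enc (f j) j = Enc z j is at most K·(δ - 1). -/
open Classical

/-- Collision counting for CA₂: if encodings of distinct messages agree in at
most `δ - 1` coordinates and `f` takes at most `K` values different from `z`,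
then at most `K·(δ - 1)` indices `j` satisfy `f j ≠ z` and
`Enc (f j) j = Enc z j`. -/
theorem collision_count (M Sym : Type) (n δ K : ℕ) (hδ : 1 ≤ δ)
    (Enc : M → (Fin n → Sym))
    (hEnc : ∀ m m' : M, m ≠ m' →
      (Finset.univ.filter (fun i : Fin n => Enc m i = Enc m' i)).card ≤ δ - 1)
    (z : M) (f : Fin n → M)
    (hK : ((Finset.univ.image f).filter (fun m : M => m ≠ z)).card ≤ K) :
    (Finset.univ.filter
      (fun j : Fin n => f j ≠ z ∧ Enc (f j) j = Enc z j)).card ≤ K * (δ - 1) := by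
  classical
  set V := (Finset.univ.image f).filter (fun m : M => m ≠ z)
  have hsub : (Finset.univ.filter
      (fun j : Fin n => f j ≠ z ∧ Enc (f j) j = Enc z j)) ⊆
      V.biUnion (fun m => Finset.univ.filter (fun j : Fin n => Enc m j = Enc z j)) := by
    intro j hj
    simp only [Finset.mem_filter, Finset.mem_univ, true_and] at hj
    apply Finset.mem_biUnion.2
    refine ⟨f j, ?_, ?_⟩
    · simp [V, hj.1]
    · simp [hj.2]
  calc _ ≤ (V.biUnion (fun m => Finset.univ.filter
        (fun j : Fin n => Enc m j = Enc z j))).card := Finset.card_le_card hsub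
    _ ≤ ∑ m ∈ V, (Finset.univ.filter (fun j : Fin n => Enc m j = Enc z j)).card :=
        Finset.card_biUnion_le
    _ ≤ ∑ m ∈ V, (δ - 1) := by
        apply Finset.sum_le_sum
        intro m hm
        simp only [V, Finset.mem_filter] at hm
        exact hEnc m z hm.2
    _ = V.card * (δ - 1) := by rw [Finset.sum_const, smul_eq_mul]
    _ ≤ K * (δ - 1) := Nat.mul_le_mul_right _ hK
end
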